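/- arXiv:1006.3020 — 5 statements merged into one kernel-verified Lean document; each statement's English description precedes it below -/
import Mathlib

section
/- In a thick spider with body K and feet S, every edge between two body vertices k1, k2 ∈ K lies in exactly one induced P4 within K ∪ S, namely s1-k2-k1-s2 where si is the unique non-neighbour of ki in S. -/
open SimpleGraph

variable {V : Type*}

/-- The four (distinct) vertices `a, b, c, d` induce a path `a - b - c - d` in `G`. -/
def IsInducedP4 (G : SimpleGraph V) (a b c d : V) : Prop :=
  a ≠ b ∧ a ≠ c ∧ a ≠ d ∧ b ≠ c ∧ b ≠ d ∧ c ≠ d ∧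
  G.Adj a b ∧ G.Adj b c ∧ G.Adj c d ∧ ¬ G.Adj a c ∧ ¬ G.Adj a d ∧ ¬ G.Adj b d

/-- In a thick spider with body `K`, feet `S` and head `R`, every edge between two
body vertices `k1, k2 ∈ K` lies in exactly one induced `P₄` within `K ∪ S`, namely the path
`s1 - k2 - k1 - s2` where `si` is the unique non-neighbour of `ki` in `S`. -/
theorem thick_spider_body_edge_in_unique_P4
    (G : SimpleGraph V) (K S R : Set V)
    (hcover : K ∪ S ∪ R = Set.univ)
    (hKS : Disjoint K S) (hKR : Disjoint K R) (hSR : Disjoint S R)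
    (hclique : G.IsClique K)
    (hstable : ∀ s1 ∈ S, ∀ s2 ∈ S, ¬ G.Adj s1 s2)
    (hRK : ∀ r ∈ R, ∀ k ∈ K, G.Adj r k)
    (hRS : ∀ r ∈ R, ∀ s ∈ S, ¬ G.Adj r s)
    (hsize : 2 ≤ K.ncard) (heq : S.ncard = K.ncard)
    (hlegS : ∀ s ∈ S, ∃! k, k ∈ K ∧ ¬ G.Adj s k)
    (hlegK : ∀ k ∈ K, ∃! s, s ∈ S ∧ ¬ G.Adj k s)
    (k1 k2 : V) (hk1 : k1 ∈ K) (hk2 : k2 ∈ K) (hne : k1 ≠ k2)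
    (s1 s2 : V) (hs1 : s1 ∈ S) (hs2 : s2 ∈ S)
    (hs1k1 : ¬ G.Adj s1 k1) (hs2k2 : ¬ G.Adj s2 k2) :
    IsInducedP4 G s1 k2 k1 s2 ∧
      ∀ a b c d : V, a ∈ K ∪ S → b ∈ K ∪ S → c ∈ K ∪ S → d ∈ K ∪ S →
        IsInducedP4 G a b c d →
        (s(k1, k2) = s(a, b) ∨ s(k1, k2) = s(b, c) ∨ s(k1, k2) = s(c, d)) →
        ({a, b, c, d} : Set V) = {s1, k2, k1, s2} := by
  classical
  have hks : ∀ {k s}, k ∈ K → s ∈ S → k ≠ s := fun hk hs =>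
    fun h => hKS.ne_of_mem hk hs h
  -- s1's unique nonneighbor in K is k1
  have uniqS : ∀ s ∈ S, ∀ k ∈ K, ¬ G.Adj s k → ∀ k' ∈ K, ¬ G.Adj s k' → k = k' := by
    intro s hs k hk hsk k' hk' hsk'
    obtain ⟨x, -, hx⟩ := hlegS s hs
    rw [hx k ⟨hk, hsk⟩, hx k' ⟨hk', hsk'⟩]
  have uniqK : ∀ k ∈ K, ∀ s ∈ S, ¬ G.Adj k s → ∀ s' ∈ S, ¬ G.Adj k s' → s = s' := by
    intro k hk s hs hks' s' hs' hks''
    obtain ⟨x, -, hx⟩ := hlegK k hk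
    rw [hx s ⟨hs, hks'⟩, hx s' ⟨hs', hks''⟩]
  have hs1s2 : s1 ≠ s2 := by
    intro h; subst h
    exact hne (uniqS s1 hs1 k1 hk1 hs1k1 k2 hk2 hs2k2)
  have hs1k2 : G.Adj s1 k2 := by
    by_contra h
    exact hne (uniqS s1 hs1 k1 hk1 hs1k1 k2 hk2 h)
  have hs2k1 : G.Adj k1 s2 := by
    by_contra h
    exact hne (uniqS s2 hs2 k1 hk1 (fun ha => h ha.symm) k2 hk2 hs2k2)
  constructor
  · refine ⟨(hks hk2 hs1).symm, (hks hk1 hs1).symm, hs1s2, fun h => hne h.symm,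
      hks hk2 hs2, hks hk1 hs2, hs1k2, hclique hk2 hk1 (fun h => hne h.symm),
      hs2k1, fun h => hs1k1 h, fun h => hstable s1 hs1 s2 hs2 h,
      fun h => hs2k2 h.symm⟩
  · intro a b c d ha hb hc hd hP4 hedge
    obtain ⟨hab, hac, had, hbc, hbd, hcd, Aab, Abc, Acd, Nac, Nad, Nbd⟩ := hP4
    -- a ∈ S
    have haS : a ∈ S := by
      rcases ha with haK | haS
      · have hcS : c ∈ S := by
          rcases hc with hcK | h
          · exact absurd (hclique haK hcK hac) Nac
          · exact h
        have hdS : d ∈ S := by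
          rcases hd with hdK | h
          · exact absurd (hclique haK hdK had) Nad
          · exact h
        exact absurd Acd (hstable c hcS d hdS)
      · exact haS
    have hbK : b ∈ K := by
      rcases hb with h | hbS
      · exact h
      · exact absurd Aab (hstable a haS b hbS)
    have hdS : d ∈ S := by
      rcases hd with hdK | h
      · exact absurd (hclique hbK hdK hbd) Nbd
      · exact h
    have hcK : c ∈ K := by
      rcases hc with h | hcS
      · exact h
      · exact absurd Acd (hstable c hcS d hdS)
    -- the edge {k1,k2} must be {b,c}
    have hbceq : (k1 = b ∧ k2 = c) ∨ (k1 = c ∧ k2 = b) := by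
      rcases hedge with h | h | h
      · rw [Sym2.eq_iff] at h
        rcases h with ⟨h1, h2⟩ | ⟨h1, h2⟩
        · exact absurd (h1 ▸ haS) (fun hh => hKS.ne_of_mem hk1 hh rfl)
        · exact absurd (h2 ▸ haS) (fun hh => hKS.ne_of_mem hk2 hh rfl)
      · exact Sym2.eq_iff.mp h
      · rcases Sym2.eq_iff.mp h with ⟨h1, h2⟩ | ⟨h1, h2⟩
        · exact absurd (h2 ▸ hdS) (fun hh => hKS.ne_of_mem hk2 hh rfl)
        · exact absurd (h1 ▸ hdS) (fun hh => hKS.ne_of_mem hk1 hh rfl)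
    rcases hbceq with ⟨h1, h2⟩ | ⟨h1, h2⟩
    · -- b = k1, c = k2 : a = s2, d = s1
      subst h1; subst h2
      have haeq : a = s2 :=
        uniqK k2 hk2 a haS (fun h => Nac h.symm) s2 hs2 (fun h => hs2k2 h.symm)
      have hdeq : d = s1 :=
        uniqK k1 hk1 d hdS Nbd s1 hs1 (fun h => hs1k1 h.symm)
      subst haeq; subst hdeq
      ext x; simp only [Set.mem_insert_iff, Set.mem_singleton_iff]; tauto
    · -- b = k2, c = k1 : a = s1, d = s2
      subst h1; subst h2
      have haeq : a = s1 :=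
        uniqK k1 hk1 a haS (fun h => Nac h.symm) s1 hs1 (fun h => hs1k1 h.symm)
      have hdeq : d = s2 :=
        uniqK k2 hk2 d hdS Nbd s2 hs2 (fun h => hs2k2 h.symm)
      subst haeq; subst hdeq
      rfl
end

section
/- If the complement of a graph G is disconnected with co-components V1, ..., Vt, then the minimum number of edge deletions to make G P4-free equals the sum over i of the minimum number of edge deletions to make the induced subgraph on Vi P4-free. -/
open SimpleGraph

variable {V : Type*}

/-- A graph is `P₄`-free (a cograph) if no four vertices induce a path on four vertices. -/
def P4Free (G : SimpleGraph V) : Prop := ∀ a b c d : V, ¬ IsInducedP4 G a b c d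

/-- `M G`: the minimum number of edge deletions turning `G` into a `P₄`-free graph. -/
noncomputable def minCographEdgeDel (G : SimpleGraph V) : ℕ :=
  sInf {n : ℕ | ∃ E' : Finset (Sym2 V), E'.card = n ∧ P4Free (G.deleteEdges ↑E')}


/-! The three non-edges `ac`, `ad`, `bd` of an induced path `a - b - c - d` connect its four
vertices in the complement, so every induced `P₄` of a graph that contains all edges between
distinct co-components lies inside one co-component. Hence optimal deletion sets of the
co-components combine to a deletion set of `G`; conversely an optimal deletion set of `G`
restricts to deletion sets of the co-components, and these restrictions are disjoint. -/

open Finset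

section P4Free

variable {W ι : Type*}

lemma isInducedP4_comap_iff (H : SimpleGraph W) (f : V ↪ W) (a b c d : V) :
    IsInducedP4 (H.comap f) a b c d ↔ IsInducedP4 H (f a) (f b) (f c) (f d) := by
  simp only [IsInducedP4, comap_adj, f.injective.ne_iff]

lemma P4Free.comap {H : SimpleGraph W} (hH : P4Free H) (f : V ↪ W) : P4Free (H.comap f) :=
  fun a b c d h => hH _ _ _ _ ((isInducedP4_comap_iff H f a b c d).mp h)

lemma P4Free.of_induce_fibers {H : SimpleGraph V} (π : V → ι)
    (hjoin : ∀ u v, π u ≠ π v → H.Adj u v) (hfib : ∀ i, P4Free (H.induce (π ⁻¹' {i}))) :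
    P4Free H := by
  intro a b c d h
  have same : ∀ {u v}, ¬ H.Adj u v → π v = π u :=
    fun huv => (not_imp_comm.mp (hjoin _ _) huv).symm
  have hc : π c = π a := same h.2.2.2.2.2.2.2.2.2.1
  have hd : π d = π a := same h.2.2.2.2.2.2.2.2.2.2.1
  have hb : π b = π a := hd ▸ (same h.2.2.2.2.2.2.2.2.2.2.2).symm
  exact hfib (π a) ⟨a, rfl⟩ ⟨b, hb⟩ ⟨c, hc⟩ ⟨d, hd⟩
    ((isInducedP4_comap_iff H (Function.Embedding.subtype _) _ _ _ _).mpr h)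

end P4Free

lemma minCographEdgeDel_spec [Fintype V] (G : SimpleGraph V) :
    ∃ E : Finset (Sym2 V), E.card = minCographEdgeDel G ∧ P4Free (G.deleteEdges ↑E) := by
  classical
  have hfull : P4Free (G.deleteEdges ↑(univ : Finset (Sym2 V))) :=
    fun a b _ _ h => (deleteEdges_adj.mp h.2.2.2.2.2.2.1).2 (mem_univ _)
  exact Nat.sInf_mem (s := {n | ∃ E : Finset (Sym2 V), E.card = n ∧ P4Free (G.deleteEdges ↑E)})
    ⟨_, univ, rfl, hfull⟩

lemma minCographEdgeDel_le {G : SimpleGraph V} {E : Finset (Sym2 V)}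
    (h : P4Free (G.deleteEdges ↑E)) : minCographEdgeDel G ≤ E.card :=
  Nat.sInf_le ⟨E, rfl, h⟩

noncomputable def edgesIn (S : Set V) (E : Finset (Sym2 V)) : Finset (Sym2 S) :=
  E.preimage (Function.Embedding.subtype (· ∈ S)).sym2Map (Function.Embedding.injective _).injOn

lemma induce_deleteEdges (G : SimpleGraph V) (S : Set V) (E : Finset (Sym2 V)) :
    (G.deleteEdges ↑E).induce S = (G.induce S).deleteEdges ↑(edgesIn S E) := by
  ext u v
  simp [edgesIn]

section Fibers

variable {ι : Type*} (π : V → ι)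

lemma fiber_eq_of_mem_sym2Map {i : ι} {e : Sym2 (π ⁻¹' {i})} {v : V}
    (hv : v ∈ (Function.Embedding.subtype (· ∈ π ⁻¹' {i})).sym2Map e) : π v = i := by
  obtain ⟨a, -, rfl⟩ := Sym2.mem_map.mp hv
  exact a.2

lemma fiber_eq_of_sym2Map_eq {i j : ι} {e : Sym2 (π ⁻¹' {i})} {e' : Sym2 (π ⁻¹' {j})}
    (h : (Function.Embedding.subtype (· ∈ π ⁻¹' {i})).sym2Map e =
      (Function.Embedding.subtype (· ∈ π ⁻¹' {j})).sym2Map e') : i = j := by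
  induction e using Sym2.ind with
  | _ x y =>
    have hx : (x : V) ∈ (Function.Embedding.subtype (· ∈ π ⁻¹' {i})).sym2Map s(x, y) := by simp
    exact (fiber_eq_of_mem_sym2Map π hx).symm.trans (fiber_eq_of_mem_sym2Map π (h ▸ hx))

variable [DecidableEq V] [Fintype ι]

noncomputable def unionEdges (F : ∀ i, Finset (Sym2 (π ⁻¹' {i}))) : Finset (Sym2 V) :=
  univ.biUnion fun i => (F i).map (Function.Embedding.subtype (· ∈ π ⁻¹' {i})).sym2Map

lemma card_unionEdges (F : ∀ i, Finset (Sym2 (π ⁻¹' {i}))) :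
    (unionEdges π F).card = ∑ i, (F i).card := by
  rw [unionEdges, card_biUnion]
  · simp only [card_map]
  · intro i _ j _ hij
    simp only [Function.onFun, Finset.disjoint_left, mem_map]
    rintro _ ⟨e, -, rfl⟩ ⟨e', -, he'⟩
    exact hij (fiber_eq_of_sym2Map_eq π he'.symm)

lemma edgesIn_unionEdges (F : ∀ i, Finset (Sym2 (π ⁻¹' {i}))) (i : ι) :
    edgesIn (π ⁻¹' {i}) (unionEdges π F) = F i := by
  ext e
  simp only [edgesIn, unionEdges, mem_preimage, mem_biUnion, mem_univ, true_and, mem_map]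
  constructor
  · rintro ⟨j, e', he', heq⟩
    obtain rfl := fiber_eq_of_sym2Map_eq π heq
    rwa [← (Function.Embedding.injective _) heq]
  · exact fun he => ⟨i, e, he, rfl⟩

lemma fiber_eq_of_mem_unionEdges (F : ∀ i, Finset (Sym2 (π ⁻¹' {i}))) {u v : V}
    (h : s(u, v) ∈ unionEdges π F) : π u = π v := by
  obtain ⟨i, -, hi⟩ := mem_biUnion.mp h
  obtain ⟨e, -, he⟩ := mem_map.mp hi
  exact (fiber_eq_of_mem_sym2Map π (he ▸ Sym2.mem_mk_left u v)).trans
    (fiber_eq_of_mem_sym2Map π (he ▸ Sym2.mem_mk_right u v)).symm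

lemma sum_card_edgesIn_le (E : Finset (Sym2 V)) :
    ∑ i, (edgesIn (π ⁻¹' {i}) E).card ≤ E.card := by
  rw [← card_unionEdges]
  exact card_le_card (biUnion_subset.mpr fun i _ => map_subset_iff_subset_preimage.mpr subset_rfl)

end Fibers

section Join

variable {ι : Type*} [Fintype V] [Fintype ι] (G : SimpleGraph V) (π : V → ι)

lemma sum_minCographEdgeDel_induce_le :
    ∑ i, minCographEdgeDel (G.induce (π ⁻¹' {i})) ≤ minCographEdgeDel G := by
  classical
  obtain ⟨E, hcard, hfree⟩ := minCographEdgeDel_spec G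
  calc ∑ i, minCographEdgeDel (G.induce (π ⁻¹' {i}))
      ≤ ∑ i, (edgesIn (π ⁻¹' {i}) E).card := sum_le_sum fun i _ =>
        minCographEdgeDel_le (induce_deleteEdges G _ E ▸ hfree.comap _)
    _ ≤ minCographEdgeDel G := hcard ▸ sum_card_edgesIn_le π E

lemma minCographEdgeDel_le_sum_induce (hjoin : ∀ u v, π u ≠ π v → G.Adj u v) :
    minCographEdgeDel G ≤ ∑ i, minCographEdgeDel (G.induce (π ⁻¹' {i})) := by
  classical
  choose F hcard hfree using fun i => minCographEdgeDel_spec (G.induce (π ⁻¹' {i}))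
  have hjoin' : ∀ u v, π u ≠ π v → (G.deleteEdges ↑(unionEdges π F)).Adj u v :=
    fun u v huv => deleteEdges_adj.mpr
      ⟨hjoin u v huv, fun h => huv (fiber_eq_of_mem_unionEdges π F h)⟩
  have hfib : ∀ i, P4Free ((G.deleteEdges ↑(unionEdges π F)).induce (π ⁻¹' {i})) := fun i => by
    rw [induce_deleteEdges, edgesIn_unionEdges]
    exact hfree i
  calc minCographEdgeDel G ≤ (unionEdges π F).card :=
        minCographEdgeDel_le (P4Free.of_induce_fibers π hjoin' hfib)
    _ = ∑ i, minCographEdgeDel (G.induce (π ⁻¹' {i})) := by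
        rw [card_unionEdges]
        exact sum_congr rfl fun i _ => hcard i

theorem minCographEdgeDel_eq_sum_induce_of_join (hjoin : ∀ u v, π u ≠ π v → G.Adj u v) :
    minCographEdgeDel G = ∑ i, minCographEdgeDel (G.induce (π ⁻¹' {i})) :=
  (minCographEdgeDel_le_sum_induce G π hjoin).antisymm (sum_minCographEdgeDel_induce_le G π)

end Join

theorem minCographEdgeDel_co_disconnected_general [Fintype V] (G : SimpleGraph V) :
    minCographEdgeDel G =
      ∑ᶠ c : Gᶜ.ConnectedComponent, minCographEdgeDel (G.induce c.supp) := by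
  have : Fintype Gᶜ.ConnectedComponent := Fintype.ofFinite _
  have hjoin : ∀ u v, Gᶜ.connectedComponentMk u ≠ Gᶜ.connectedComponentMk v → G.Adj u v := by
    intro u v huv
    by_contra h
    have hcompl : Gᶜ.Adj u v := (G.compl_adj u v).mpr ⟨ne_of_apply_ne _ huv, h⟩
    exact huv (ConnectedComponent.sound hcompl.reachable)
  rw [finsum_eq_sum_of_fintype]
  exact minCographEdgeDel_eq_sum_induce_of_join G _ hjoin

/-- If the complement of `G` is disconnected, then the minimum number of edge
deletions needed to make `G` `P₄`-free equals the sum, over the co-components of `G` (the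
connected components of the complement `Gᶜ`), of the minimum number of edge deletions needed
to make the induced subgraph on that co-component `P₄`-free. -/
theorem minCographEdgeDel_co_disconnected [Fintype V] (G : SimpleGraph V)
    (hdis : ¬ Gᶜ.Connected) :
    minCographEdgeDel G =
      ∑ᶠ c : Gᶜ.ConnectedComponent, minCographEdgeDel (G.induce c.supp) :=
  minCographEdgeDel_co_disconnected_general G
end

section
/- An edge joining two vertices that lie in distinct co-components of a graph G cannot belong to any induced P4 of G. -/
open SimpleGraph

variable {V : Type*}

/-- An edge joining two vertices that lie in distinct co-components of `G`
(connected components of the complement `Gᶜ`) cannot belong to any induced `P₄` of `G`. -/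
theorem edge_between_cocomponents_not_in_P4 (G : SimpleGraph V) (u v : V)
    (huv : G.Adj u v)
    (hcc : Gᶜ.connectedComponentMk u ≠ Gᶜ.connectedComponentMk v) :
    ∀ a b c d : V, IsInducedP4 G a b c d →
      ¬ (s(u, v) = s(a, b) ∨ s(u, v) = s(b, c) ∨ s(u, v) = s(c, d)) := by
  rintro a b c d ⟨hab, hac, had, hbc, hbd, hcd, Gab, Gbc, Gcd, nac, nad, nbd⟩ h
  have Hac : Gᶜ.Adj a c := ⟨hac, nac⟩
  have Had : Gᶜ.Adj a d := ⟨had, nad⟩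
  have Hbd : Gᶜ.Adj b d := ⟨hbd, nbd⟩
  have eab : Gᶜ.connectedComponentMk a = Gᶜ.connectedComponentMk b := by
    apply ConnectedComponent.sound
    exact (Had.reachable).trans (Hbd.reachable.symm)
  have eac : Gᶜ.connectedComponentMk a = Gᶜ.connectedComponentMk c :=
    ConnectedComponent.sound Hac.reachable
  have ead : Gᶜ.connectedComponentMk a = Gᶜ.connectedComponentMk d :=
    ConnectedComponent.sound Had.reachable
  have ebc : Gᶜ.connectedComponentMk b = Gᶜ.connectedComponentMk c := eab.symm.trans eac
  have ebd : Gᶜ.connectedComponentMk b = Gᶜ.connectedComponentMk d := eab.symm.trans ead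
  have ecd : Gᶜ.connectedComponentMk c = Gᶜ.connectedComponentMk d := eac.symm.trans ead
  rcases h with h | h | h <;>
    rcases Sym2.eq_iff.mp h with ⟨rfl, rfl⟩ | ⟨rfl, rfl⟩ <;>
    exact hcc (by first | assumption | (symm; assumption))
end

section
/- Let G be a spider with head R, body K and feet S, and let M(H) denote the minimum size of an edge set whose deletion makes H P4-free. Then M(G) = M(G[R]) + M(G[K ∪ S]). -/
open SimpleGraph

variable {V : Type*}

namespace SpiderAux

set_option linter.unusedSectionVars false

variable [DecidableEq V]

open Classical in
lemma mset_nonempty [Fintype V] (G : SimpleGraph V) :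
    {n : ℕ | ∃ E' : Finset (Sym2 V), E'.card = n ∧ P4Free (G.deleteEdges ↑E')}.Nonempty := by
  classical
  refine ⟨(Finset.univ : Finset (Sym2 V)).card, (Finset.univ : Finset (Sym2 V)), rfl, ?_⟩
  intro a b c d h
  have := h.2.2.2.2.2.2.1
  rw [deleteEdges_adj] at this
  exact this.2 (by simp)

lemma exists_optimal [Fintype V] (G : SimpleGraph V) :
    ∃ E' : Finset (Sym2 V), E'.card = minCographEdgeDel G ∧ P4Free (G.deleteEdges ↑E') :=
  Nat.sInf_mem (mset_nonempty G)

lemma minCographEdgeDel_le (G : SimpleGraph V) (E' : Finset (Sym2 V))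
    (h : P4Free (G.deleteEdges ↑E')) : minCographEdgeDel G ≤ E'.card :=
  Nat.sInf_le ⟨E', rfl, h⟩

/-- the embedding of edge-sets of a subtype -/
def edgeEmb (A : Set V) : Sym2 A ↪ Sym2 V :=
  ⟨Sym2.map Subtype.val, Sym2.map.injective Subtype.val_injective⟩

lemma mem_edgeEmb_image {A : Set V} {E : Finset (Sym2 A)} {e : Sym2 V}
    (he : e ∈ E.map (edgeEmb A)) : ∀ v ∈ e, v ∈ A := by
  rw [Finset.mem_map] at he
  obtain ⟨e', -, rfl⟩ := he
  induction e' using Sym2.ind with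
  | _ x y =>
    intro v hv
    rcases Sym2.mem_iff.1 hv with h | h
    · exact h ▸ x.2
    · exact h ▸ y.2

lemma adj_transfer {G : SimpleGraph V} {A : Set V} (EA : Finset (Sym2 A))
    (F : Finset (Sym2 V)) (hF : ∀ e ∈ F, ∃ v ∈ e, v ∉ A) (x y : A) :
    ((G.induce A).deleteEdges ↑EA).Adj x y ↔
      (G.deleteEdges ↑(EA.map (edgeEmb A) ∪ F)).Adj x.1 y.1 := by
  rw [deleteEdges_adj, deleteEdges_adj]
  constructor
  · rintro ⟨ha, hm⟩
    refine ⟨ha, ?_⟩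
    intro hmem
    rcases Finset.mem_union.1 (by exact_mod_cast hmem) with h | h
    · rw [Finset.mem_map] at h
      obtain ⟨e', he', heq⟩ := h
      have he2 : e' = s(x, y) := (edgeEmb A).injective (by rw [heq]; rfl)
      exact hm (by simpa [he2] using he')
    · obtain ⟨v, hv, hvA⟩ := hF _ h
      rcases Sym2.mem_iff.1 hv with h' | h'
      · exact hvA (h' ▸ x.2)
      · exact hvA (h' ▸ y.2)
  · rintro ⟨ha, hm⟩
    refine ⟨ha, ?_⟩
    intro hmem
    apply hm
    have : (s(x.1, y.1) : Sym2 V) ∈ EA.map (edgeEmb A) := by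
      rw [Finset.mem_map]
      exact ⟨s(x, y), hmem, rfl⟩
    exact_mod_cast Finset.mem_union_left _ this

lemma restricted_p4free {G : SimpleGraph V} {A : Set V} (EA : Finset (Sym2 A))
    (F : Finset (Sym2 V)) (hF : ∀ e ∈ F, ∃ v ∈ e, v ∉ A)
    (h : P4Free ((G.induce A).deleteEdges ↑EA)) :
    ∀ a b c d : V, a ∈ A → b ∈ A → c ∈ A → d ∈ A →
      ¬ IsInducedP4 (G.deleteEdges ↑(EA.map (edgeEmb A) ∪ F)) a b c d := by
  intro a b c d ha hb hc hd hP4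
  obtain ⟨n1, n2, n3, n4, n5, n6, e1, e2, e3, m1, m2, m3⟩ := hP4
  refine h ⟨a, ha⟩ ⟨b, hb⟩ ⟨c, hc⟩ ⟨d, hd⟩
    ⟨by simpa [Subtype.ext_iff] using n1, by simpa [Subtype.ext_iff] using n2,
     by simpa [Subtype.ext_iff] using n3, by simpa [Subtype.ext_iff] using n4,
     by simpa [Subtype.ext_iff] using n5, by simpa [Subtype.ext_iff] using n6,
     (adj_transfer EA F hF _ _).2 e1, (adj_transfer EA F hF _ _).2 e2,
     (adj_transfer EA F hF _ _).2 e3,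
     fun h' => m1 ((adj_transfer EA F hF _ _).1 h'),
     fun h' => m2 ((adj_transfer EA F hF _ _).1 h'),
     fun h' => m3 ((adj_transfer EA F hF _ _).1 h')⟩

end SpiderAux

namespace SpiderAux

set_option linter.unusedSectionVars false

/-- class analysis: 0 = K, 1 = S, 2 = R.  Any P4 is entirely inside R or entirely inside K ∪ S. -/
lemma class3 : ∀ ca cb cc cd : Fin 3,
    (¬(ca = 1 ∧ cb = 1) ∧ ¬(ca = 1 ∧ cb = 2) ∧ ¬(ca = 2 ∧ cb = 1)) →
    (¬(cb = 1 ∧ cc = 1) ∧ ¬(cb = 1 ∧ cc = 2) ∧ ¬(cb = 2 ∧ cc = 1)) →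
    (¬(cc = 1 ∧ cd = 1) ∧ ¬(cc = 1 ∧ cd = 2) ∧ ¬(cc = 2 ∧ cd = 1)) →
    (¬(ca = 0 ∧ cc = 0) ∧ ¬(ca = 0 ∧ cc = 2) ∧ ¬(ca = 2 ∧ cc = 0)) →
    (¬(ca = 0 ∧ cd = 0) ∧ ¬(ca = 0 ∧ cd = 2) ∧ ¬(ca = 2 ∧ cd = 0)) →
    (¬(cb = 0 ∧ cd = 0) ∧ ¬(cb = 0 ∧ cd = 2) ∧ ¬(cb = 2 ∧ cd = 0)) →
    (ca = 2 ∧ cb = 2 ∧ cc = 2 ∧ cd = 2) ∨ (ca ≠ 2 ∧ cb ≠ 2 ∧ cc ≠ 2 ∧ cd ≠ 2) := by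
  intro ca cb cc cd h1 h2 h3 h4 h5 h6
  fin_cases ca <;> fin_cases cb <;> fin_cases cc <;> fin_cases cd <;> simp_all

/-- class analysis inside the body: 0 = K, 1 = S. Any P4 has shape S-K-K-S. -/
lemma class2 : ∀ ca cb cc cd : Fin 2,
    ¬(ca = 1 ∧ cb = 1) → ¬(cb = 1 ∧ cc = 1) → ¬(cc = 1 ∧ cd = 1) →
    ¬(ca = 0 ∧ cc = 0) → ¬(ca = 0 ∧ cd = 0) → ¬(cb = 0 ∧ cd = 0) →
    ca = 1 ∧ cb = 0 ∧ cc = 0 ∧ cd = 1 := by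
  intro ca cb cc cd h1 h2 h3 h4 h5 h6
  fin_cases ca <;> fin_cases cb <;> fin_cases cc <;> fin_cases cd <;> simp_all

end SpiderAux

namespace SpiderAux

set_option linter.unusedSectionVars false

variable [DecidableEq V]

lemma preimage_injOn (A : Set V) (E' : Finset (Sym2 V)) :
    Set.InjOn (edgeEmb A) ((edgeEmb A) ⁻¹' ↑E') :=
  fun _ _ _ _ h => (edgeEmb A).injective h

lemma sub_p4free_of_big {G : SimpleGraph V} (A : Set V) (E' : Finset (Sym2 V))
    (hfree : P4Free (G.deleteEdges ↑E')) :
    P4Free ((G.induce A).deleteEdges ↑(E'.preimage (edgeEmb A) (preimage_injOn A E'))) := by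
  have hadj : ∀ x y : A,
      ((G.induce A).deleteEdges ↑(E'.preimage (edgeEmb A) (preimage_injOn A E'))).Adj x y ↔
      (G.deleteEdges ↑E').Adj x.1 y.1 := by
    intro x y
    rw [deleteEdges_adj, deleteEdges_adj]
    have hmem : (s(x, y) : Sym2 A) ∈ E'.preimage (edgeEmb A) (preimage_injOn A E') ↔
        (s(x.1, y.1) : Sym2 V) ∈ E' := by
      rw [Finset.mem_preimage]; rfl
    constructor
    · rintro ⟨h1, h2⟩
      exact ⟨h1, fun hm => h2 (by exact_mod_cast hmem.2 (by exact_mod_cast hm))⟩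
    · rintro ⟨h1, h2⟩
      exact ⟨h1, fun hm => h2 (by exact_mod_cast hmem.1 (by exact_mod_cast hm))⟩
  intro a b c d h
  obtain ⟨n1, n2, n3, n4, n5, n6, e1, e2, e3, m1, m2, m3⟩ := h
  exact hfree a.1 b.1 c.1 d.1
    ⟨fun h' => n1 (Subtype.ext h'), fun h' => n2 (Subtype.ext h'), fun h' => n3 (Subtype.ext h'),
     fun h' => n4 (Subtype.ext h'), fun h' => n5 (Subtype.ext h'), fun h' => n6 (Subtype.ext h'),
     (hadj _ _).1 e1, (hadj _ _).1 e2, (hadj _ _).1 e3,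
     fun h' => m1 ((hadj _ _).2 h'), fun h' => m2 ((hadj _ _).2 h'), fun h' => m3 ((hadj _ _).2 h')⟩

lemma lower_bound [Fintype V] (G : SimpleGraph V) (A B : Set V) (hAB : Disjoint A B) :
    minCographEdgeDel (G.induce A) + minCographEdgeDel (G.induce B) ≤ minCographEdgeDel G := by
  obtain ⟨E', hcard, hfree⟩ := exists_optimal G
  set EA := E'.preimage (edgeEmb A) (preimage_injOn A E') with hEA
  set EB := E'.preimage (edgeEmb B) (preimage_injOn B E') with hEB
  have hA : minCographEdgeDel (G.induce A) ≤ EA.card :=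
    minCographEdgeDel_le _ _ (sub_p4free_of_big A E' hfree)
  have hB : minCographEdgeDel (G.induce B) ≤ EB.card :=
    minCographEdgeDel_le _ _ (sub_p4free_of_big B E' hfree)
  have hsubA : EA.map (edgeEmb A) ⊆ E' := by
    intro e he
    rw [Finset.mem_map] at he
    obtain ⟨e', he', rfl⟩ := he
    exact Finset.mem_preimage.1 he'
  have hsubB : EB.map (edgeEmb B) ⊆ E' := by
    intro e he
    rw [Finset.mem_map] at he
    obtain ⟨e', he', rfl⟩ := he
    exact Finset.mem_preimage.1 he'
  have hdisj : Disjoint (EA.map (edgeEmb A)) (EB.map (edgeEmb B)) := by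
    rw [Finset.disjoint_left]
    intro e heA heB
    have h1 := mem_edgeEmb_image heA
    have h2 := mem_edgeEmb_image heB
    induction e using Sym2.ind with
    | _ x y =>
      exact hAB.ne_of_mem (h1 x (by simp)) (h2 x (by simp)) rfl
  calc minCographEdgeDel (G.induce A) + minCographEdgeDel (G.induce B)
      ≤ EA.card + EB.card := Nat.add_le_add hA hB
    _ = (EA.map (edgeEmb A)).card + (EB.map (edgeEmb B)).card := by rw [Finset.card_map, Finset.card_map]
    _ = ((EA.map (edgeEmb A)) ∪ (EB.map (edgeEmb B))).card := (Finset.card_union_of_disjoint hdisj).symm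
    _ ≤ E'.card := Finset.card_le_card (Finset.union_subset hsubA hsubB)
    _ = minCographEdgeDel G := hcard

end SpiderAux

namespace SpiderAux

set_option linter.unusedSectionVars false

variable [DecidableEq V]

lemma combine {G : SimpleGraph V} {K S R : Set V}
    (hcover : K ∪ S ∪ R = Set.univ)
    (hKS : Disjoint K S) (hKR : Disjoint K R) (hSR : Disjoint S R)
    (hclique : G.IsClique K)
    (hstable : ∀ s1 ∈ S, ∀ s2 ∈ S, ¬ G.Adj s1 s2)
    (hRK : ∀ r ∈ R, ∀ k ∈ K, G.Adj r k)
    (hRS : ∀ r ∈ R, ∀ s ∈ S, ¬ G.Adj r s)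
    (ER : Finset (Sym2 R)) (hER : P4Free ((G.induce R).deleteEdges ↑ER))
    (D : Finset (Sym2 V)) (hD : ∀ e ∈ D, ∃ x ∈ S, ∃ k ∈ K, e = s(x, k))
    (hbody : ∀ a b c d : V, a ∈ K ∪ S → b ∈ K ∪ S → c ∈ K ∪ S → d ∈ K ∪ S →
      ¬ IsInducedP4 (G.deleteEdges ↑D) a b c d) :
    P4Free (G.deleteEdges ↑(ER.map (edgeEmb R) ∪ D)) := by
  set H := G.deleteEdges ↑(ER.map (edgeEmb R) ∪ D) with hH
  -- D edges have a vertex outside R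
  have hDnotR : ∀ e ∈ D, ∃ v ∈ e, v ∉ R := by
    intro e he
    obtain ⟨x, hx, k, hk, rfl⟩ := hD e he
    exact ⟨x, by simp, fun hxR => hSR.ne_of_mem hx hxR rfl⟩
  have hRfree := restricted_p4free ER D hDnotR hER
  -- adjacency within K ∪ S agrees with G.deleteEdges D
  have hbodyadj : ∀ x y : V, x ∈ K ∪ S → y ∈ K ∪ S →
      (H.Adj x y ↔ (G.deleteEdges ↑D).Adj x y) := by
    intro x y hx hy
    rw [hH, deleteEdges_adj, deleteEdges_adj]
    have : (s(x, y) : Sym2 V) ∈ ER.map (edgeEmb R) → False := by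
      intro hm
      have := mem_edgeEmb_image hm x (by simp)
      rcases hx with h | h
      · exact hKR.ne_of_mem h this rfl
      · exact hSR.ne_of_mem h this rfl
    constructor
    · rintro ⟨h1, h2⟩
      exact ⟨h1, fun hm => h2 (by exact_mod_cast Finset.mem_union_right _ hm)⟩
    · rintro ⟨h1, h2⟩
      refine ⟨h1, fun hm => ?_⟩
      rcases Finset.mem_union.1 (by exact_mod_cast hm) with h | h
      · exact this h
      · exact h2 h
  -- H-adjacency of K-K and K-R pairs
  have hHKK : ∀ x y, x ∈ K → y ∈ K → x ≠ y → H.Adj x y := by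
    intro x y hx hy hne
    rw [hH, deleteEdges_adj]
    refine ⟨hclique hx hy hne, fun hm => ?_⟩
    rcases Finset.mem_union.1 (by exact_mod_cast hm) with h | h
    · exact hKR.ne_of_mem hx (mem_edgeEmb_image h x (by simp)) rfl
    · obtain ⟨z, hz, k, hk, he⟩ := hD _ h
      rcases Sym2.eq_iff.1 he with ⟨h1, h2⟩ | ⟨h1, h2⟩
      · exact hKS.ne_of_mem hx hz h1
      · exact hKS.ne_of_mem hy hz h2
  have hHRK : ∀ r k, r ∈ R → k ∈ K → H.Adj r k := by
    intro r k hr hk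
    rw [hH, deleteEdges_adj]
    refine ⟨hRK r hr k hk, fun hm => ?_⟩
    rcases Finset.mem_union.1 (by exact_mod_cast hm) with h | h
    · exact hKR.ne_of_mem hk (mem_edgeEmb_image h k (by simp)) rfl
    · obtain ⟨z, hz, k', hk', he⟩ := hD _ h
      rcases Sym2.eq_iff.1 he with ⟨h1, h2⟩ | ⟨h1, h2⟩
      · exact hSR.ne_of_mem hz hr h1.symm
      · exact hKS.ne_of_mem hk hz h2
  -- the class function
  classical
  set c : V → Fin 3 := fun v => if v ∈ K then 0 else if v ∈ S then 1 else 2 with hc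
  have hcmem : ∀ v, (v ∈ K ∧ c v = 0) ∨ (v ∈ S ∧ c v = 1) ∨ (v ∈ R ∧ c v = 2) := by
    intro v
    by_cases h1 : v ∈ K
    · exact Or.inl ⟨h1, by simp [hc, h1]⟩
    · by_cases h2 : v ∈ S
      · exact Or.inr (Or.inl ⟨h2, by simp [hc, h1, h2]⟩)
      · have hv : v ∈ R := by
          have : v ∈ K ∪ S ∪ R := hcover ▸ Set.mem_univ v
          rcases this with (h | h) | h
          exacts [absurd h h1, absurd h h2, h]
        exact Or.inr (Or.inr ⟨hv, by simp [hc, h1, h2]⟩)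
  have hcK : ∀ v, c v = 0 → v ∈ K := by
    intro v hv
    rcases hcmem v with ⟨h, _⟩ | ⟨_, h2⟩ | ⟨_, h2⟩
    · exact h
    · exact absurd (h2.symm.trans hv) (by decide)
    · exact absurd (h2.symm.trans hv) (by decide)
  have hcS : ∀ v, c v = 1 → v ∈ S := by
    intro v hv
    rcases hcmem v with ⟨_, h2⟩ | ⟨h, _⟩ | ⟨_, h2⟩
    · exact absurd (h2.symm.trans hv) (by decide)
    · exact h
    · exact absurd (h2.symm.trans hv) (by decide)
  have hcR : ∀ v, c v = 2 → v ∈ R := by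
    intro v hv
    rcases hcmem v with ⟨_, h2⟩ | ⟨_, h2⟩ | ⟨h, _⟩
    · exact absurd (h2.symm.trans hv) (by decide)
    · exact absurd (h2.symm.trans hv) (by decide)
    · exact h
  have hcKS : ∀ v, c v ≠ 2 → v ∈ K ∪ S := by
    intro v hv
    rcases hcmem v with ⟨h, _⟩ | ⟨h, _⟩ | ⟨_, h2⟩
    · exact Or.inl h
    · exact Or.inr h
    · exact absurd h2 hv
  -- edge and nonedge constraints
  have hedge : ∀ x y, H.Adj x y →
      ¬(c x = 1 ∧ c y = 1) ∧ ¬(c x = 1 ∧ c y = 2) ∧ ¬(c x = 2 ∧ c y = 1) := by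
    intro x y hxy
    have hGxy : G.Adj x y := by
      rw [hH, deleteEdges_adj] at hxy; exact hxy.1
    refine ⟨fun ⟨h1, h2⟩ => hstable x (hcS x h1) y (hcS y h2) hGxy,
            fun ⟨h1, h2⟩ => hRS y (hcR y h2) x (hcS x h1) hGxy.symm,
            fun ⟨h1, h2⟩ => hRS x (hcR x h1) y (hcS y h2) hGxy⟩
  have hnonedge : ∀ x y, x ≠ y → ¬H.Adj x y →
      ¬(c x = 0 ∧ c y = 0) ∧ ¬(c x = 0 ∧ c y = 2) ∧ ¬(c x = 2 ∧ c y = 0) := by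
    intro x y hne hxy
    refine ⟨fun ⟨h1, h2⟩ => hxy (hHKK x y (hcK x h1) (hcK y h2) hne),
            fun ⟨h1, h2⟩ => hxy ((hHRK y x (hcR y h2) (hcK x h1)).symm),
            fun ⟨h1, h2⟩ => hxy (hHRK x y (hcR x h1) (hcK y h2))⟩
  -- main argument
  intro a b c' d hP4
  obtain ⟨n1, n2, n3, n4, n5, n6, e1, e2, e3, m1, m2, m3⟩ := hP4
  rcases class3 (c a) (c b) (c c') (c d)
      (hedge a b e1) (hedge b c' e2) (hedge c' d e3)
      (hnonedge a c' n2 m1) (hnonedge a d n3 m2) (hnonedge b d n5 m3) with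
    ⟨ha, hb, hc', hd⟩ | ⟨ha, hb, hc', hd⟩
  · exact hRfree a b c' d (hcR a ha) (hcR b hb) (hcR c' hc') (hcR d hd)
      ⟨n1, n2, n3, n4, n5, n6, e1, e2, e3, m1, m2, m3⟩
  · have haM := hcKS a ha
    have hbM := hcKS b hb
    have hcM := hcKS c' hc'
    have hdM := hcKS d hd
    exact hbody a b c' d haM hbM hcM hdM
      ⟨n1, n2, n3, n4, n5, n6,
       (hbodyadj a b haM hbM).1 e1, (hbodyadj b c' hbM hcM).1 e2, (hbodyadj c' d hcM hdM).1 e3,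
       fun h => m1 ((hbodyadj a c' haM hcM).2 h),
       fun h => m2 ((hbodyadj a d haM hdM).2 h),
       fun h => m3 ((hbodyadj b d hbM hdM).2 h)⟩

end SpiderAux

namespace SpiderAux

set_option linter.unusedSectionVars false

variable [DecidableEq V]

lemma body_class2 {G : SimpleGraph V} {K S : Set V} (hKS : Disjoint K S)
    {D : Finset (Sym2 V)}
    (hstable : ∀ s1 ∈ S, ∀ s2 ∈ S, ¬ G.Adj s1 s2)
    (hKK : ∀ x y, x ∈ K → y ∈ K → x ≠ y → (G.deleteEdges ↑D).Adj x y)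
    {a b c d : V} (haM : a ∈ K ∪ S) (hbM : b ∈ K ∪ S) (hcM : c ∈ K ∪ S) (hdM : d ∈ K ∪ S)
    (h : IsInducedP4 (G.deleteEdges ↑D) a b c d) :
    a ∈ S ∧ b ∈ K ∧ c ∈ K ∧ d ∈ S := by
  classical
  obtain ⟨n1, n2, n3, n4, n5, n6, e1, e2, e3, m1, m2, m3⟩ := h
  set c2 : V → Fin 2 := fun v => if v ∈ K then 0 else 1 with hc2
  have hc2K : ∀ v, v ∈ K ∪ S → c2 v = 0 → v ∈ K := by
    intro v hv h0
    by_contra h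
    simp [hc2, h] at h0
  have hc2S : ∀ v, v ∈ K ∪ S → c2 v = 1 → v ∈ S := by
    intro v hv h1
    rcases hv with h | h
    · simp [hc2, h] at h1
    · exact h
  have hedge : ∀ x y, x ∈ K ∪ S → y ∈ K ∪ S → (G.deleteEdges ↑D).Adj x y →
      ¬(c2 x = 1 ∧ c2 y = 1) := by
    rintro x y hx hy hxy ⟨h1, h2⟩
    exact hstable x (hc2S x hx h1) y (hc2S y hy h2) ((deleteEdges_adj.1 hxy).1)
  have hnonedge : ∀ x y, x ∈ K ∪ S → y ∈ K ∪ S → x ≠ y → ¬(G.deleteEdges ↑D).Adj x y →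
      ¬(c2 x = 0 ∧ c2 y = 0) := by
    rintro x y hx hy hne hxy ⟨h1, h2⟩
    exact hxy (hKK x y (hc2K x hx h1) (hc2K y hy h2) hne)
  obtain ⟨ha, hb, hc', hd⟩ := class2 (c2 a) (c2 b) (c2 c) (c2 d)
    (hedge a b haM hbM e1) (hedge b c hbM hcM e2) (hedge c d hcM hdM e3)
    (hnonedge a c haM hcM n2 m1) (hnonedge a d haM hdM n3 m2) (hnonedge b d hbM hdM n5 m3)
  exact ⟨hc2S a haM ha, hc2K b hbM hb, hc2K c hcM hc', hc2S d hdM hd⟩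

lemma thin_exists_D [Fintype V] (G : SimpleGraph V) (K S : Set V)
    (hKS : Disjoint K S) (hclique : G.IsClique K)
    (hstable : ∀ s1 ∈ S, ∀ s2 ∈ S, ¬ G.Adj s1 s2)
    (hsize : 2 ≤ K.ncard) (heq : S.ncard = K.ncard)
    (hthin1 : ∀ s ∈ S, ∃! k, k ∈ K ∧ G.Adj s k)
    (hthin2 : ∀ k ∈ K, ∃! s, s ∈ S ∧ G.Adj k s)
    (F : Finset (Sym2 V))
    (hFfree : ∀ a b c d : V, a ∈ K ∪ S → b ∈ K ∪ S → c ∈ K ∪ S → d ∈ K ∪ S →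
      ¬ IsInducedP4 (G.deleteEdges ↑F) a b c d) :
    ∃ D : Finset (Sym2 V), D.card ≤ F.card ∧ (∀ e ∈ D, ∃ x ∈ S, ∃ k ∈ K, e = s(x, k)) ∧
      (∀ a b c d : V, a ∈ K ∪ S → b ∈ K ∪ S → c ∈ K ∪ S → d ∈ K ∪ S →
        ¬ IsInducedP4 (G.deleteEdges ↑D) a b c d) := by
  classical
  have hSfin : S.Finite := Set.toFinite S
  set SF := hSfin.toFinset with hSF
  have hmemSF : ∀ s, s ∈ SF ↔ s ∈ S := fun s => hSfin.mem_toFinset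
  have hSFcard : SF.card = S.ncard := (Set.ncard_eq_toFinset_card S hSfin).symm
  have hSFpos : SF.Nonempty := by
    rw [← Finset.card_pos, hSFcard, heq]; omega
  -- the matching function
  set m : V → V := fun s => if h : s ∈ S then (hthin1 s h).choose else s with hm
  have hmspec : ∀ s ∈ S, (m s ∈ K ∧ G.Adj s (m s)) ∧
      ∀ k, (k ∈ K ∧ G.Adj s k) → k = m s := by
    intro s hs
    simp only [hm, dif_pos hs]
    exact (hthin1 s hs).choose_spec
  have hmK : ∀ s ∈ S, m s ∈ K := fun s hs => ((hmspec s hs).1).1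
  have hmAdj : ∀ s ∈ S, G.Adj s (m s) := fun s hs => ((hmspec s hs).1).2
  have hmUniq : ∀ s ∈ S, ∀ k ∈ K, G.Adj s k → k = m s :=
    fun s hs k hk hadj => (hmspec s hs).2 k ⟨hk, hadj⟩
  have hmInj : ∀ s ∈ S, ∀ s' ∈ S, m s = m s' → s = s' := by
    intro s hs s' hs' hmm
    obtain ⟨x, -, hxu⟩ := hthin2 (m s) (hmK s hs)
    have h1 : s = x := hxu s ⟨hs, (hmAdj s hs).symm⟩
    have h2 : s' = x := hxu s' ⟨hs', hmm ▸ (hmAdj s' hs').symm⟩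
    rw [h1, h2]
  have hmnotS : ∀ s ∈ S, ∀ t ∈ S, m s ≠ t := by
    intro s hs t ht h
    exact hKS.ne_of_mem (hmK s hs) ht h
  -- the hitting property
  have hhit : ∀ s ∈ S, ∀ s' ∈ S, s ≠ s' →
      s(s, m s) ∈ F ∨ s(m s, m s') ∈ F ∨ s(s', m s') ∈ F := by
    intro s hs s' hs' hne
    by_contra hcon
    push_neg at hcon
    obtain ⟨h1, h2, h3⟩ := hcon
    have hmm : m s ≠ m s' := fun h => hne (hmInj s hs s' hs' h)
    refine hFfree s (m s) (m s') s' (Or.inr hs) (Or.inl (hmK s hs)) (Or.inl (hmK s' hs'))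
      (Or.inr hs')
      ⟨fun h => hmnotS s hs s hs h.symm, fun h => hmnotS s' hs' s hs h.symm, hne,
       hmm, fun h => hmnotS s hs s' hs' h, fun h => hmnotS s' hs' s' hs' h, ?_, ?_, ?_, ?_, ?_, ?_⟩
    · exact deleteEdges_adj.2 ⟨hmAdj s hs, by exact_mod_cast h1⟩
    · exact deleteEdges_adj.2 ⟨hclique (hmK s hs) (hmK s' hs') hmm, by exact_mod_cast h2⟩
    · refine deleteEdges_adj.2 ⟨(hmAdj s' hs').symm, ?_⟩
      rw [Sym2.eq_swap]; exact_mod_cast h3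
    · intro h
      have := deleteEdges_adj.1 h
      exact hmm ((hmUniq s hs (m s') (hmK s' hs') this.1).symm)
    · intro h
      exact hstable s hs s' hs' (deleteEdges_adj.1 h).1
    · intro h
      have := ((deleteEdges_adj.1 h).1).symm
      exact hmm (hmUniq s' hs' (m s) (hmK s hs) this)
  -- choose s0
  obtain ⟨s0, hs0SF, hs0prop⟩ :
      ∃ s0 ∈ SF, ∀ s ∈ SF, s(s, m s) ∉ F → s(s0, m s0) ∉ F := by
    by_cases hbad : (SF.filter (fun s => s(s, m s) ∉ F)).Nonempty
    · obtain ⟨s0, hs0⟩ := hbad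
      rw [Finset.mem_filter] at hs0
      exact ⟨s0, hs0.1, fun _ _ _ => hs0.2⟩
    · obtain ⟨s0, hs0⟩ := hSFpos
      refine ⟨s0, hs0, fun s hsSF hsF => absurd ⟨s, Finset.mem_filter.2 ⟨hsSF, hsF⟩⟩ hbad⟩
  refine ⟨(SF.erase s0).image (fun s => s(s, m s)), ?_, ?_, ?_⟩
  · -- cardinality
    have h1 : ((SF.erase s0).image (fun s => s(s, m s))).card ≤ (SF.erase s0).card :=
      Finset.card_image_le
    have h2 : (SF.erase s0).card ≤ F.card := by
      apply Finset.card_le_card_of_injOn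
        (fun s => if s(s, m s) ∈ F then s(s, m s) else s(m s0, m s))
      · intro s hsE
        have hsS : s ∈ S := (hmemSF s).1 (Finset.mem_of_mem_erase hsE)
        have hs0S : s0 ∈ S := (hmemSF s0).1 hs0SF
        by_cases hin : s(s, m s) ∈ F
        · simpa [hin] using hin
        · simp only [hin, if_false]
          have hs0F : s(s0, m s0) ∉ F :=
            hs0prop s (Finset.mem_of_mem_erase hsE) hin
          rcases hhit s0 hs0S s hsS (fun h => (Finset.mem_erase.1 hsE).1 h.symm) with
            h | h | h
          · exact absurd h hs0F
          · exact h
          · exact absurd h hin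
      · intro s hsE t htE heq2
        simp only [Finset.coe_erase, Set.mem_diff] at hsE htE
        have hsS : s ∈ S := (hmemSF s).1 hsE.1
        have htS : t ∈ S := (hmemSF t).1 htE.1
        have hs0S : s0 ∈ S := (hmemSF s0).1 hs0SF
        have hsne : s ≠ s0 := by simpa using hsE.2
        have htne : t ≠ s0 := by simpa using htE.2
        by_cases h1 : s(s, m s) ∈ F <;> by_cases h2 : s(t, m t) ∈ F <;>
          simp only [h1, h2, if_true, if_false] at heq2
        · rcases Sym2.eq_iff.1 heq2 with ⟨ha, hb⟩ | ⟨ha, hb⟩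
          · exact ha
          · exact absurd ha.symm (hmnotS t htS s hsS)
        · rcases Sym2.eq_iff.1 heq2 with ⟨ha, hb⟩ | ⟨ha, hb⟩
          · exact absurd ha.symm (hmnotS s0 hs0S s hsS)
          · exact absurd ha.symm (hmnotS t htS s hsS)
        · rcases Sym2.eq_iff.1 heq2 with ⟨ha, hb⟩ | ⟨ha, hb⟩
          · exact absurd ha (hmnotS s0 hs0S t htS)
          · exact absurd hb (hmnotS s hsS t htS)
        · rcases Sym2.eq_iff.1 heq2 with ⟨ha, hb⟩ | ⟨ha, hb⟩
          · exact hmInj s hsS t htS hb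
          · exact absurd (hmInj s hsS s0 hs0S hb) hsne
    omega
  · -- edge shape
    intro e he
    rw [Finset.mem_image] at he
    obtain ⟨s, hsE, rfl⟩ := he
    have hsS : s ∈ S := (hmemSF s).1 (Finset.mem_of_mem_erase hsE)
    exact ⟨s, hsS, m s, hmK s hsS, rfl⟩
  · -- body P4-freeness
    intro a b c d haM hbM hcM hdM hP4
    set D := (SF.erase s0).image (fun s => s(s, m s)) with hD
    have hKK : ∀ x y, x ∈ K → y ∈ K → x ≠ y → (G.deleteEdges ↑D).Adj x y := by
      intro x y hx hy hne
      refine deleteEdges_adj.2 ⟨hclique hx hy hne, fun hmem => ?_⟩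
      rw [hD] at hmem
      have hmem' : s(x,y) ∈ (SF.erase s0).image (fun s => s(s, m s)) := by exact_mod_cast hmem
      rw [Finset.mem_image] at hmem'
      obtain ⟨s, hsE, heq2⟩ := hmem'
      have hsS : s ∈ S := (hmemSF s).1 (Finset.mem_of_mem_erase hsE)
      rcases Sym2.eq_iff.1 heq2 with ⟨ha, hb⟩ | ⟨ha, hb⟩
      · exact hKS.ne_of_mem hx hsS ha.symm
      · exact hKS.ne_of_mem hy hsS ha.symm
    obtain ⟨haS, hbK, hcK, hdS⟩ := body_class2 hKS hstable hKK haM hbM hcM hdM hP4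
    obtain ⟨n1, n2, n3, n4, n5, n6, e1, e2, e3, m1, m2, m3⟩ := hP4
    -- a - b adjacency forces a = s0, and d - c adjacency forces d = s0
    have ha0 : a = s0 := by
      by_contra hne
      have h := deleteEdges_adj.1 e1
      have hb' : b = m a := hmUniq a haS b hbK h.1
      apply h.2
      have hmem : a ∈ SF.erase s0 := Finset.mem_erase.2 ⟨hne, (hmemSF a).2 haS⟩
      have hin : s(a, m a) ∈ D := Finset.mem_image_of_mem _ hmem
      rw [hb']
      exact_mod_cast hin
    have hd0 : d = s0 := by
      by_contra hne
      have h := deleteEdges_adj.1 e3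
      have hc' : c = m d := hmUniq d hdS c hcK h.1.symm
      apply h.2
      have hmem : d ∈ SF.erase s0 := Finset.mem_erase.2 ⟨hne, (hmemSF d).2 hdS⟩
      have hin : s(d, m d) ∈ D := Finset.mem_image_of_mem _ hmem
      rw [hc', Sym2.eq_swap]
      exact_mod_cast hin
    exact n3 (ha0.trans hd0.symm)

end SpiderAux

namespace SpiderAux

set_option linter.unusedSectionVars false

variable [DecidableEq V]

lemma thick_exists_D [Fintype V] (G : SimpleGraph V) (K S : Set V)
    (hKS : Disjoint K S) (hclique : G.IsClique K)
    (hstable : ∀ s1 ∈ S, ∀ s2 ∈ S, ¬ G.Adj s1 s2)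
    (hsize : 2 ≤ K.ncard) (heq : S.ncard = K.ncard)
    (hthick1 : ∀ s ∈ S, ∃! k, k ∈ K ∧ ¬ G.Adj s k)
    (hthick2 : ∀ k ∈ K, ∃! s, s ∈ S ∧ ¬ G.Adj k s)
    (F : Finset (Sym2 V))
    (hFfree : ∀ a b c d : V, a ∈ K ∪ S → b ∈ K ∪ S → c ∈ K ∪ S → d ∈ K ∪ S →
      ¬ IsInducedP4 (G.deleteEdges ↑F) a b c d) :
    ∃ D : Finset (Sym2 V), D.card ≤ F.card ∧ (∀ e ∈ D, ∃ x ∈ S, ∃ k ∈ K, e = s(x, k)) ∧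
      (∀ a b c d : V, a ∈ K ∪ S → b ∈ K ∪ S → c ∈ K ∪ S → d ∈ K ∪ S →
        ¬ IsInducedP4 (G.deleteEdges ↑D) a b c d) := by
  classical
  have hSfin : S.Finite := Set.toFinite S
  set SF := hSfin.toFinset with hSF
  have hmemSF : ∀ s, s ∈ SF ↔ s ∈ S := fun s => hSfin.mem_toFinset
  -- the co-matching function
  set m : V → V := fun s => if h : s ∈ S then (hthick1 s h).choose else s with hm
  have hmspec : ∀ s ∈ S, (m s ∈ K ∧ ¬ G.Adj s (m s)) ∧
      ∀ k, (k ∈ K ∧ ¬ G.Adj s k) → k = m s := by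
    intro s hs
    simp only [hm, dif_pos hs]
    exact (hthick1 s hs).choose_spec
  have hmK : ∀ s ∈ S, m s ∈ K := fun s hs => ((hmspec s hs).1).1
  have hmNAdj : ∀ s ∈ S, ¬ G.Adj s (m s) := fun s hs => ((hmspec s hs).1).2
  have hmUniq : ∀ s ∈ S, ∀ k ∈ K, ¬ G.Adj s k → k = m s :=
    fun s hs k hk hadj => (hmspec s hs).2 k ⟨hk, hadj⟩
  have hAdj : ∀ s ∈ S, ∀ k ∈ K, k ≠ m s → G.Adj s k := by
    intro s hs k hk hne
    by_contra h
    exact hne (hmUniq s hs k hk h)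
  have hmInj : ∀ s ∈ S, ∀ s' ∈ S, m s = m s' → s = s' := by
    intro s hs s' hs' hmm
    obtain ⟨x, -, hxu⟩ := hthick2 (m s) (hmK s hs)
    have h1 : s = x := hxu s ⟨hs, fun h => hmNAdj s hs h.symm⟩
    have h2 : s' = x := hxu s' ⟨hs', fun h => hmNAdj s' hs' (hmm ▸ h.symm)⟩
    rw [h1, h2]
  have hmnotS : ∀ s ∈ S, ∀ t ∈ S, m s ≠ t := by
    intro s hs t ht h
    exact hKS.ne_of_mem (hmK s hs) ht h
  have hmSurj : ∀ k ∈ K, ∃ s ∈ S, m s = k := by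
    intro k hk
    obtain ⟨x, ⟨hxS, hxn⟩, -⟩ := hthick2 k hk
    exact ⟨x, hxS, (hmUniq x hxS k hk (fun h => hxn h.symm)).symm⟩
  -- an injective ordering
  set ord : V → ℕ := fun v => ((Fintype.equivFin V) v : ℕ) with hord
  have hordInj : ∀ x y : V, ord x = ord y → x = y := by
    intro x y h
    exact (Fintype.equivFin V).injective (Fin.val_injective h)
  -- the hitting property
  have hhit : ∀ s ∈ S, ∀ s' ∈ S, s ≠ s' →
      s(s, m s') ∈ F ∨ s(m s', m s) ∈ F ∨ s(m s, s') ∈ F := by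
    intro s hs s' hs' hne
    by_contra hcon
    push_neg at hcon
    obtain ⟨h1, h2, h3⟩ := hcon
    have hmm : m s' ≠ m s := fun h => hne (hmInj s' hs' s hs h).symm
    refine hFfree s (m s') (m s) s' (Or.inr hs) (Or.inl (hmK s' hs')) (Or.inl (hmK s hs))
      (Or.inr hs')
      ⟨fun h => hmnotS s' hs' s hs h.symm, fun h => hmnotS s hs s hs h.symm, hne,
       hmm, fun h => hmnotS s' hs' s' hs' h, fun h => hmnotS s hs s' hs' h, ?_, ?_, ?_, ?_, ?_, ?_⟩
    · exact deleteEdges_adj.2 ⟨hAdj s hs (m s') (hmK s' hs') hmm, by exact_mod_cast h1⟩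
    · exact deleteEdges_adj.2 ⟨hclique (hmK s' hs') (hmK s hs) hmm, by exact_mod_cast h2⟩
    · refine deleteEdges_adj.2 ⟨(hAdj s' hs' (m s) (hmK s hs) (fun h => hmm h.symm)).symm, ?_⟩
      exact_mod_cast h3
    · intro h
      exact hmNAdj s hs (deleteEdges_adj.1 h).1
    · intro h
      exact hstable s hs s' hs' (deleteEdges_adj.1 h).1
    · intro h
      exact hmNAdj s' hs' ((deleteEdges_adj.1 h).1).symm
  -- the pair set and deletion set
  set P := (SF ×ˢ SF).filter (fun p => ord p.1 < ord p.2) with hP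
  have hPmem : ∀ p ∈ P, p.1 ∈ S ∧ p.2 ∈ S ∧ ord p.1 < ord p.2 := by
    intro p hp
    rw [hP, Finset.mem_filter, Finset.mem_product] at hp
    exact ⟨(hmemSF _).1 hp.1.1, (hmemSF _).1 hp.1.2, hp.2⟩
  have hPmem' : ∀ x y, x ∈ S → y ∈ S → ord x < ord y → (x, y) ∈ P := by
    intro x y hx hy hxy
    rw [hP, Finset.mem_filter, Finset.mem_product]
    exact ⟨⟨(hmemSF _).2 hx, (hmemSF _).2 hy⟩, hxy⟩
  set D := P.image (fun p => s(p.1, m p.2)) with hD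
  have hDmem : ∀ x k, s(x, k) ∈ D → ∃ p ∈ P, s(p.1, m p.2) = s(x, k) := by
    intro x k hxk
    rw [hD, Finset.mem_image] at hxk
    obtain ⟨p, hp, hpe⟩ := hxk
    exact ⟨p, hp, hpe⟩
  refine ⟨D, ?_, ?_, ?_⟩
  · -- cardinality
    have h1 : D.card ≤ P.card := Finset.card_image_le
    have h2 : P.card ≤ F.card := by
      apply Finset.card_le_card_of_injOn
        (fun p => if s(p.1, m p.2) ∈ F then s(p.1, m p.2)
          else if s(m p.2, m p.1) ∈ F then s(m p.2, m p.1) else s(m p.1, p.2))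
      · intro p hp
        obtain ⟨h1S, h2S, hlt⟩ := hPmem p hp
        have hne : p.1 ≠ p.2 := fun h => by simp [h] at hlt
        by_cases c1 : s(p.1, m p.2) ∈ F
        · simpa [c1] using c1
        · by_cases c2 : s(m p.2, m p.1) ∈ F
          · simpa [c1, c2] using c2
          · simp only [c1, c2, if_false]
            rcases hhit p.1 h1S p.2 h2S hne with h | h | h
            · exact absurd h c1
            · exact absurd h c2
            · exact h
      · intro p hp q hq heq2
        have hpS := hPmem p (by exact_mod_cast hp)
        have hqS := hPmem q (by exact_mod_cast hq)
        obtain ⟨hp1, hp2, hplt⟩ := hpS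
        obtain ⟨hq1, hq2, hqlt⟩ := hqS
        have hP1 : p.1 = q.1 → p.2 = q.2 → p = q := fun h h2 => Prod.ext h h2
        dsimp only at heq2
        split_ifs at heq2 <;>
          rcases Sym2.eq_iff.1 heq2 with ⟨ha, hb⟩ | ⟨ha, hb⟩ <;>
          first
          | exact absurd ha (Ne.symm (hmnotS q.2 hq2 p.1 hp1))
          | exact absurd ha (Ne.symm (hmnotS q.1 hq1 p.1 hp1))
          | exact absurd ha (hmnotS p.2 hp2 q.1 hq1)
          | exact absurd ha (hmnotS p.2 hp2 q.2 hq2)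
          | exact absurd ha (hmnotS p.1 hp1 q.1 hq1)
          | exact absurd ha (hmnotS p.1 hp1 q.2 hq2)
          | exact absurd hb (hmnotS p.1 hp1 q.1 hq1)
          | exact absurd hb (hmnotS p.1 hp1 q.2 hq2)
          | exact absurd hb (Ne.symm (hmnotS q.1 hq1 p.2 hp2))
          | exact absurd hb (Ne.symm (hmnotS q.2 hq2 p.2 hp2))
          | exact hP1 ha (hmInj p.2 hp2 q.2 hq2 hb)
          | exact hP1 (hmInj p.1 hp1 q.1 hq1 hb) (hmInj p.2 hp2 q.2 hq2 ha)
          | exact hP1 (hmInj p.1 hp1 q.1 hq1 ha) hb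
          | (have hx1 := congrArg ord ha
             have hx2 := congrArg ord (hmInj p.2 hp2 q.1 hq1 hb)
             omega)
          | (have hx1 := congrArg ord (hmInj p.1 hp1 q.2 hq2 hb)
             have hx2 := congrArg ord (hmInj p.2 hp2 q.1 hq1 ha)
             omega)
          | (have hx1 := congrArg ord (hmInj p.1 hp1 q.2 hq2 ha)
             have hx2 := congrArg ord hb
             omega)
    omega
  · -- edge shape
    intro e he
    rw [hD, Finset.mem_image] at he
    obtain ⟨p, hp, rfl⟩ := he
    obtain ⟨h1S, h2S, -⟩ := hPmem p hp
    exact ⟨p.1, h1S, m p.2, hmK p.2 h2S, rfl⟩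
  · -- body P4-freeness
    intro a b c d haM hbM hcM hdM hP4
    have hKK : ∀ x y, x ∈ K → y ∈ K → x ≠ y → (G.deleteEdges ↑D).Adj x y := by
      intro x y hx hy hne
      refine deleteEdges_adj.2 ⟨hclique hx hy hne, fun hmem => ?_⟩
      obtain ⟨p, hp, heq2⟩ := hDmem x y (by exact_mod_cast hmem)
      obtain ⟨h1S, -, -⟩ := hPmem p hp
      rcases Sym2.eq_iff.1 heq2 with ⟨ha, hb⟩ | ⟨ha, hb⟩
      · exact hKS.ne_of_mem hx h1S ha.symm
      · exact hKS.ne_of_mem hy h1S ha.symm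
    obtain ⟨haS, hbK, hcK, hdS⟩ := body_class2 hKS hstable hKK haM hbM hcM hdM hP4
    obtain ⟨n1, n2, n3, n4, n5, n6, e1, e2, e3, m1, m2, m3⟩ := hP4
    obtain ⟨sb, hsbS, hsb⟩ := hmSurj b hbK
    obtain ⟨sc, hscS, hsc⟩ := hmSurj c hcK
    -- from the edge a-b : ord sb < ord a
    have hord1 : ord sb < ord a := by
      have h := deleteEdges_adj.1 e1
      have hne : sb ≠ a := by
        intro hh
        have hma : m a = b := by rw [← hh]; exact hsb
        exact hmNAdj a haS (by rw [hma]; exact h.1)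
      rcases Nat.lt_or_ge (ord sb) (ord a) with hlt | hge
      · exact hlt
      · exfalso
        have hlt2 : ord a < ord sb :=
          lt_of_le_of_ne hge (fun hh => hne (hordInj sb a hh.symm))
        apply h.2
        have hin : s(a, m sb) ∈ D := Finset.mem_image_of_mem _ (hPmem' a sb haS hsbS hlt2)
        rw [hsb] at hin
        exact_mod_cast hin
    -- from the edge c-d : ord sc < ord d
    have hord2 : ord sc < ord d := by
      have h := deleteEdges_adj.1 e3
      have hne : sc ≠ d := by
        intro hh
        have hmd : m d = c := by rw [← hh]; exact hsc
        exact hmNAdj d hdS (by rw [hmd]; exact h.1.symm)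
      rcases Nat.lt_or_ge (ord sc) (ord d) with hlt | hge
      · exact hlt
      · exfalso
        have hlt2 : ord d < ord sc :=
          lt_of_le_of_ne hge (fun hh => hne (hordInj sc d hh.symm))
        apply h.2
        have hin : s(d, m sc) ∈ D := Finset.mem_image_of_mem _ (hPmem' d sc hdS hscS hlt2)
        rw [hsc] at hin
        rw [Sym2.eq_swap]
        exact_mod_cast hin
    -- from the non-edge a-c : ord a ≤ ord sc
    have hord3 : ord a ≤ ord sc := by
      rw [deleteEdges_adj] at m1
      push_neg at m1
      by_cases hGac : G.Adj a c
      · have hin := m1 hGac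
        obtain ⟨p, hp, heq2⟩ := hDmem a c (by exact_mod_cast hin)
        obtain ⟨h1S, h2S, hlt⟩ := hPmem p hp
        rcases Sym2.eq_iff.1 heq2 with ⟨ha, hb⟩ | ⟨ha, hb⟩
        · have hpsc : p.2 = sc := hmInj p.2 h2S sc hscS (by rw [hb, hsc])
          have ea := congrArg ord ha
          have eb := congrArg ord hpsc
          omega
        · exact absurd ha.symm (hKS.ne_of_mem hcK h1S)
      · have hca : c = m a := hmUniq a haS c hcK hGac
        have hsca : sc = a := hmInj sc hscS a haS (by rw [hsc, hca])
        have := congrArg ord hsca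
        omega
    -- from the non-edge b-d : ord d ≤ ord sb
    have hord4 : ord d ≤ ord sb := by
      rw [deleteEdges_adj] at m3
      push_neg at m3
      by_cases hGbd : G.Adj b d
      · have hin := m3 hGbd
        obtain ⟨p, hp, heq2⟩ := hDmem b d (by exact_mod_cast hin)
        obtain ⟨h1S, h2S, hlt⟩ := hPmem p hp
        rcases Sym2.eq_iff.1 heq2 with ⟨ha, hb⟩ | ⟨ha, hb⟩
        · exact absurd ha.symm (hKS.ne_of_mem hbK h1S)
        · have hpsb : p.2 = sb := hmInj p.2 h2S sb hsbS (by rw [hb, hsb])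
          have ea := congrArg ord ha
          have eb := congrArg ord hpsb
          omega
      · have hbd : b = m d := hmUniq d hdS b hbK (fun hh => hGbd hh.symm)
        have hsbd : sb = d := hmInj sb hsbS d hdS (by rw [hsb, hbd])
        have := congrArg ord hsbd
        omega
    omega

end SpiderAux


open SpiderAux

/-- For a spider `G` (thin or thick) with body `K`, feet `S` and head `R`,
the minimum number of edge deletions making `G` `P₄`-free satisfies
`M(G) = M(G[R]) + M(G[K ∪ S])`. -/
theorem spider_minCographEdgeDel_decomposition [Fintype V]
    (G : SimpleGraph V) (K S R : Set V)
    (hcover : K ∪ S ∪ R = Set.univ)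
    (hKS : Disjoint K S) (hKR : Disjoint K R) (hSR : Disjoint S R)
    (hclique : G.IsClique K)
    (hstable : ∀ s1 ∈ S, ∀ s2 ∈ S, ¬ G.Adj s1 s2)
    (hRK : ∀ r ∈ R, ∀ k ∈ K, G.Adj r k)
    (hRS : ∀ r ∈ R, ∀ s ∈ S, ¬ G.Adj r s)
    (hsize : 2 ≤ K.ncard) (heq : S.ncard = K.ncard)
    (hlegs : ((∀ s ∈ S, ∃! k, k ∈ K ∧ G.Adj s k) ∧ (∀ k ∈ K, ∃! s, s ∈ S ∧ G.Adj k s)) ∨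
      ((∀ s ∈ S, ∃! k, k ∈ K ∧ ¬ G.Adj s k) ∧ (∀ k ∈ K, ∃! s, s ∈ S ∧ ¬ G.Adj k s))) :
    minCographEdgeDel G =
      minCographEdgeDel (G.induce R) + minCographEdgeDel (G.induce (K ∪ S)) := by
  classical
  refine le_antisymm ?_ ?_
  · -- upper bound
    obtain ⟨ER, hERcard, hERfree⟩ := exists_optimal (G.induce R)
    obtain ⟨EB, hEBcard, hEBfree⟩ := exists_optimal (G.induce (K ∪ S))
    set F := EB.map (edgeEmb (K ∪ S)) with hF
    have hFfree : ∀ a b c d : V, a ∈ K ∪ S → b ∈ K ∪ S → c ∈ K ∪ S → d ∈ K ∪ S →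
        ¬ IsInducedP4 (G.deleteEdges ↑F) a b c d := by
      have h := restricted_p4free EB (∅ : Finset (Sym2 V))
        (fun e he => absurd he (Finset.notMem_empty e)) hEBfree
      rw [Finset.union_empty] at h
      exact h
    have hFcard : F.card = minCographEdgeDel (G.induce (K ∪ S)) := by
      rw [hF, Finset.card_map, hEBcard]
    have key : ∃ D : Finset (Sym2 V), D.card ≤ F.card ∧
        (∀ e ∈ D, ∃ x ∈ S, ∃ k ∈ K, e = s(x, k)) ∧
        (∀ a b c d : V, a ∈ K ∪ S → b ∈ K ∪ S → c ∈ K ∪ S → d ∈ K ∪ S →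
          ¬ IsInducedP4 (G.deleteEdges ↑D) a b c d) := by
      rcases hlegs with hthin | hthick
      · exact thin_exists_D G K S hKS hclique hstable hsize heq hthin.1 hthin.2 F hFfree
      · exact thick_exists_D G K S hKS hclique hstable hsize heq hthick.1 hthick.2 F hFfree
    obtain ⟨D, hDcard, hDshape, hDfree⟩ := key
    have hcomb : P4Free (G.deleteEdges ↑(ER.map (edgeEmb R) ∪ D)) :=
      combine hcover hKS hKR hSR hclique hstable hRK hRS ER hERfree D hDshape hDfree
    have hdisj : Disjoint (ER.map (edgeEmb R)) D := by
      rw [Finset.disjoint_left]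
      intro e heR heD
      obtain ⟨x, hxS, k, hk, rfl⟩ := hDshape e heD
      exact hSR.ne_of_mem hxS (mem_edgeEmb_image heR x (by simp)) rfl
    calc minCographEdgeDel G ≤ (ER.map (edgeEmb R) ∪ D).card :=
          minCographEdgeDel_le G _ hcomb
      _ = (ER.map (edgeEmb R)).card + D.card := Finset.card_union_of_disjoint hdisj
      _ = ER.card + D.card := by rw [Finset.card_map]
      _ ≤ minCographEdgeDel (G.induce R) + minCographEdgeDel (G.induce (K ∪ S)) := by
          rw [hERcard]
          exact Nat.add_le_add_left (hDcard.trans (le_of_eq hFcard)) _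
  · -- lower bound
    have hdisj : Disjoint R (K ∪ S) :=
      Set.disjoint_union_right.2 ⟨hKR.symm, hSR.symm⟩
    exact lower_bound G R (K ∪ S) hdisj
end

section
/- Let G be a C4-free graph whose complement is disconnected, with H a co-component of G containing two nonadjacent vertices, and let M(G) denote the minimum number of edge deletions making G both P4-free and C4-free. Then M(G) = M(G[H]). -/
open SimpleGraph

variable {V : Type*}

/-- The four (distinct) vertices `a, b, c, d` induce a 4-cycle `a - b - c - d - a` in `G`. -/
def IsInducedC4 (G : SimpleGraph V) (a b c d : V) : Prop :=
  a ≠ b ∧ a ≠ c ∧ a ≠ d ∧ b ≠ c ∧ b ≠ d ∧ c ≠ d ∧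
  G.Adj a b ∧ G.Adj b c ∧ G.Adj c d ∧ G.Adj d a ∧ ¬ G.Adj a c ∧ ¬ G.Adj b d

def C4Free (G : SimpleGraph V) : Prop := ∀ a b c d : V, ¬ IsInducedC4 G a b c d

/-- `M G`: the minimum number of edge deletions turning `G` into a trivially perfect graph,
i.e. one that is both `P₄`-free and `C₄`-free. -/
noncomputable def minTPEdgeDel (G : SimpleGraph V) : ℕ :=
  sInf {n : ℕ | ∃ E' : Finset (Sym2 V),
    E'.card = n ∧ P4Free (G.deleteEdges ↑E') ∧ C4Free (G.deleteEdges ↑E')}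

/- ### Auxiliary lemmas -/

lemma nat_sInf_le_sInf_aux {S T : Set ℕ} (hS : S.Nonempty)
    (h : ∀ n ∈ S, ∃ m ∈ T, m ≤ n) : sInf T ≤ sInf S := by
  obtain ⟨m, hm, hle⟩ := h _ (Nat.sInf_mem hS)
  exact le_trans (Nat.sInf_le hm) hle

lemma adj_of_ne_component {G : SimpleGraph V} {w x : V}
    (h : Gᶜ.connectedComponentMk w ≠ Gᶜ.connectedComponentMk x) : G.Adj w x := by
  by_contra hadj
  have hne : w ≠ x := fun e => h (by rw [e])
  exact h (ConnectedComponent.sound (Adj.reachable ((G.compl_adj w x).2 ⟨hne, hadj⟩)))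

/-- Every vertex outside the co-component `c` is universal in `G`. -/
lemma universal_of_not_mem_supp {G : SimpleGraph V} (hC4 : C4Free G)
    {c : Gᶜ.ConnectedComponent} {u v : V} (hu : u ∈ c.supp) (hv : v ∈ c.supp)
    (huv : u ≠ v) (hnadj : ¬ G.Adj u v)
    {w x : V} (hw : w ∉ c.supp) (hwx : w ≠ x) : G.Adj w x := by
  rw [ConnectedComponent.mem_supp_iff] at hu hv hw
  by_cases hx : Gᶜ.connectedComponentMk x = c
  · exact adj_of_ne_component (by rw [hx]; exact hw)
  · by_contra hadj
    have auw : G.Adj u w := adj_of_ne_component (by rw [hu]; exact fun e => hw e.symm)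
    have auxx : G.Adj u x := adj_of_ne_component (by rw [hu]; exact fun e => hx e.symm)
    have avw : G.Adj v w := adj_of_ne_component (by rw [hv]; exact fun e => hw e.symm)
    have avx : G.Adj v x := adj_of_ne_component (by rw [hv]; exact fun e => hx e.symm)
    exact hC4 u w v x ⟨auw.ne, huv, auxx.ne, avw.ne.symm, hwx, avx.ne,
      auw, avw.symm, avx, auxx.symm, hnadj, hadj⟩

lemma adj_transfer {G : SimpleGraph V} {s : Set V} {E' : Finset (Sym2 V)}
    {E'' : Finset (Sym2 s)}
    (h : ∀ a b : s, s(a, b) ∈ E'' ↔ s((a : V), (b : V)) ∈ E') (a b : s) :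
    ((G.induce s).deleteEdges ↑E'').Adj a b ↔ (G.deleteEdges ↑E').Adj ↑a ↑b := by
  simp [deleteEdges_adj, h a b]

lemma isInducedP4_map {α β : Type*} {G₁ : SimpleGraph α} {G₂ : SimpleGraph β} {f : α → β}
    (hf : Function.Injective f) (h : ∀ a b, G₁.Adj a b ↔ G₂.Adj (f a) (f b))
    {a b c d : α} (hp : IsInducedP4 G₁ a b c d) :
    IsInducedP4 G₂ (f a) (f b) (f c) (f d) := by
  obtain ⟨h1, h2, h3, h4, h5, h6, h7, h8, h9, h10, h11, h12⟩ := hp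
  exact ⟨hf.ne h1, hf.ne h2, hf.ne h3, hf.ne h4, hf.ne h5, hf.ne h6,
    (h a b).1 h7, (h b c).1 h8, (h c d).1 h9,
    fun q => h10 ((h a c).2 q), fun q => h11 ((h a d).2 q), fun q => h12 ((h b d).2 q)⟩

lemma isInducedC4_map {α β : Type*} {G₁ : SimpleGraph α} {G₂ : SimpleGraph β} {f : α → β}
    (hf : Function.Injective f) (h : ∀ a b, G₁.Adj a b ↔ G₂.Adj (f a) (f b))
    {a b c d : α} (hp : IsInducedC4 G₁ a b c d) :
    IsInducedC4 G₂ (f a) (f b) (f c) (f d) := by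
  obtain ⟨h1, h2, h3, h4, h5, h6, h7, h8, h9, h10, h11, h12⟩ := hp
  exact ⟨hf.ne h1, hf.ne h2, hf.ne h3, hf.ne h4, hf.ne h5, hf.ne h6,
    (h a b).1 h7, (h b c).1 h8, (h c d).1 h9, (h d a).1 h10,
    fun q => h11 ((h a c).2 q), fun q => h12 ((h b d).2 q)⟩

lemma bot_P4Free : P4Free (⊥ : SimpleGraph V) := by
  rintro a b c d ⟨-, -, -, -, -, -, h, -⟩
  exact h

lemma bot_C4Free : C4Free (⊥ : SimpleGraph V) := by
  rintro a b c d ⟨-, -, -, -, -, -, h, -⟩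
  exact h

open Classical in
lemma minTP_set_nonempty [Fintype V] (G : SimpleGraph V) :
    {n : ℕ | ∃ E' : Finset (Sym2 V),
      E'.card = n ∧ P4Free (G.deleteEdges ↑E') ∧ C4Free (G.deleteEdges ↑E')}.Nonempty := by
  refine ⟨(Finset.univ : Finset (Sym2 V)).card, Finset.univ, rfl, ?_, ?_⟩
  · have : G.deleteEdges ↑(Finset.univ : Finset (Sym2 V)) = ⊥ := by
      ext a b
      simp [deleteEdges_adj]
    rw [this]; exact bot_P4Free
  · have : G.deleteEdges ↑(Finset.univ : Finset (Sym2 V)) = ⊥ := by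
      ext a b
      simp [deleteEdges_adj]
    rw [this]; exact bot_C4Free

theorem C4Free_co_disconnected_minTPEdgeDel [Fintype V] (G : SimpleGraph V)
    (hC4 : C4Free G) (hdis : ¬ Gᶜ.Connected)
    (c : Gᶜ.ConnectedComponent)
    (u v : V) (hu : u ∈ c.supp) (hv : v ∈ c.supp) (huv : u ≠ v) (hnadj : ¬ G.Adj u v) :
    minTPEdgeDel G = minTPEdgeDel (G.induce c.supp) := by
  classical
  set s : Set V := c.supp with hs
  letI : Fintype s := Fintype.ofFinite _
  have hinj : Function.Injective (Sym2.map (Subtype.val : s → V)) :=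
    Sym2.map.injective Subtype.val_injective
  unfold minTPEdgeDel
  apply le_antisymm
  · -- M(G) ≤ M(G[H]) : lift a deletion set from the induced graph
    apply nat_sInf_le_sInf_aux (minTP_set_nonempty _)
    rintro n ⟨E'', hcard, hP4, hC4'⟩
    set E' : Finset (Sym2 V) := E''.map ⟨Sym2.map Subtype.val, hinj⟩ with hE'
    -- every endpoint of a deleted edge is in s
    have hend : ∀ w x : V, s(w, x) ∈ E' → w ∈ s := by
      intro w x hwx
      rw [hE', Finset.mem_map] at hwx
      obtain ⟨e, -, he⟩ := hwx
      simp only [Function.Embedding.coeFn_mk] at he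
      have : w ∈ Sym2.map Subtype.val e := by rw [he]; exact Sym2.mem_mk_left w x
      obtain ⟨y, -, hy⟩ := Sym2.mem_map.1 this
      rw [← hy]; exact y.2
    -- vertices outside s are universal in the deleted graph
    have huniv : ∀ w x : V, w ∉ s → w ≠ x → (G.deleteEdges ↑E').Adj w x := by
      intro w x hw hwx
      rw [deleteEdges_adj]
      exact ⟨universal_of_not_mem_supp hC4 hu hv huv hnadj hw hwx,
        fun hmem => hw (hend w x hmem)⟩
    have hboth : ∀ a b : V, a ≠ b → ¬(G.deleteEdges ↑E').Adj a b → a ∈ s ∧ b ∈ s := by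
      intro a b hne hn
      constructor
      · by_contra h; exact hn (huniv a b h hne)
      · by_contra h; exact hn ((huniv b a h hne.symm).symm)
    have hmemiff : ∀ a b : s, s(a, b) ∈ E'' ↔ s((a : V), (b : V)) ∈ E' := by
      intro a b
      constructor
      · intro hab
        rw [hE', Finset.mem_map]
        exact ⟨s(a, b), hab, rfl⟩
      · intro hab
        rw [hE', Finset.mem_map] at hab
        obtain ⟨e, he, heq⟩ := hab
        simp only [Function.Embedding.coeFn_mk] at heq
        have : e = s(a, b) := hinj (by rw [heq]; rfl)
        rwa [this] at he
    have hadj := adj_transfer (G := G) hmemiff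
    refine ⟨n, ⟨E', ?_, ?_, ?_⟩, le_rfl⟩
    · rw [hE', Finset.card_map]; exact hcard
    · rintro a b c' d ⟨h1, h2, h3, h4, h5, h6, h7, h8, h9, h10, h11, h12⟩
      obtain ⟨ha, hc⟩ := hboth a c' h2 h10
      obtain ⟨hb, hd⟩ := hboth b d h5 h12
      exact hP4 ⟨a, ha⟩ ⟨b, hb⟩ ⟨c', hc⟩ ⟨d, hd⟩
        ⟨Subtype.coe_ne_coe.1 h1, Subtype.coe_ne_coe.1 h2, Subtype.coe_ne_coe.1 h3,
          Subtype.coe_ne_coe.1 h4, Subtype.coe_ne_coe.1 h5, Subtype.coe_ne_coe.1 h6,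
          (hadj _ _).2 h7, (hadj _ _).2 h8, (hadj _ _).2 h9,
          fun q => h10 ((hadj _ _).1 q), fun q => h11 ((hadj _ _).1 q),
          fun q => h12 ((hadj _ _).1 q)⟩
    · rintro a b c' d ⟨h1, h2, h3, h4, h5, h6, h7, h8, h9, h10, h11, h12⟩
      obtain ⟨ha, hc⟩ := hboth a c' h2 h11
      obtain ⟨hb, hd⟩ := hboth b d h5 h12
      exact hC4' ⟨a, ha⟩ ⟨b, hb⟩ ⟨c', hc⟩ ⟨d, hd⟩
        ⟨Subtype.coe_ne_coe.1 h1, Subtype.coe_ne_coe.1 h2, Subtype.coe_ne_coe.1 h3,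
          Subtype.coe_ne_coe.1 h4, Subtype.coe_ne_coe.1 h5, Subtype.coe_ne_coe.1 h6,
          (hadj _ _).2 h7, (hadj _ _).2 h8, (hadj _ _).2 h9, (hadj _ _).2 h10,
          fun q => h11 ((hadj _ _).1 q), fun q => h12 ((hadj _ _).1 q)⟩
  · -- M(G[H]) ≤ M(G) : restrict a deletion set of G to s
    apply nat_sInf_le_sInf_aux (minTP_set_nonempty _)
    rintro n ⟨E', hcard, hP4, hC4'⟩
    set E'' : Finset (Sym2 s) :=
      Finset.univ.filter (fun e => Sym2.map Subtype.val e ∈ E') with hE''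
    have hmemiff : ∀ a b : s, s(a, b) ∈ E'' ↔ s((a : V), (b : V)) ∈ E' := by
      intro a b
      rw [hE'', Finset.mem_filter]
      simp
    have hadj := adj_transfer (G := G) hmemiff
    refine ⟨E''.card, ⟨E'', rfl, ?_, ?_⟩, ?_⟩
    · rintro a b c' d hp
      exact hP4 ↑a ↑b ↑c' ↑d (isInducedP4_map Subtype.val_injective hadj hp)
    · rintro a b c' d hp
      exact hC4' ↑a ↑b ↑c' ↑d (isInducedC4_map Subtype.val_injective hadj hp)
    · rw [← hcard, ← Finset.card_image_of_injective E'' hinj]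
      apply Finset.card_le_card
      intro e he
      rw [Finset.mem_image] at he
      obtain ⟨e'', he'', heq⟩ := he
      rw [hE'', Finset.mem_filter] at he''
      rw [← heq]; exact he''.2
end
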